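/- For every real x, the error function admits the series representation erf(x) = x/√π + (x/√π)·[1 + x²/3]·e^{−x²} + (x⁵/(6√π))·Σ_{k=0}^∞ (−1)^k (2k+1)·(k+1)!·x^{2k} / [(2k+5)·∏_{r=1}^k (Σ_{i=1}^r (2i+1))], where the empty product (k = 0) equals 1, and the series converges for all x. -/

import Mathlib

/-!
Integrating the exponential series of `exp (-t²)` term by term writes `erf x` as the power
series `(2/√π) ∑ (-1)ⁿ x^(2n+1) / ((2n+1) n!)`. Since `∏_{r ≤ k} ∑_{i ≤ r} (2i+1) = k! (k+2)! / 2`,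
the right-hand side is a power series in `x` as well, built from the exponential series of
`exp (-x²)`, and the two agree coefficientwise: the coefficients of `x` and `x³` are matched by
`x + x (1 + x²/3) exp (-x²)`, and for `n ≥ 2` the coefficient of `x^(2n+1)` reduces to the
rational identity `2/(2n+1) = 1 - n/3 + (n-1)(2n-3)/(3(2n+1))` (after factoring `(-1)ⁿ/n!`).
-/

open Real intervalIntegral

/-- The error function. -/
noncomputable def erf (x : ℝ) : ℝ :=
  (2 / Real.sqrt π) * ∫ t in (0:ℝ)..x, Real.exp (-t ^ 2)

theorem hasSum_exp_neg_sq (t : ℝ) :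
    HasSum (fun n : ℕ => (-1 : ℝ) ^ n * t ^ (2 * n) / n.factorial) (exp (-t ^ 2)) := by
  have hterm (n : ℕ) : (-t ^ 2) ^ n / n.factorial = (-1 : ℝ) ^ n * t ^ (2 * n) / n.factorial := by
    rw [neg_pow, pow_mul]
  have h : HasSum (fun n : ℕ => (-t ^ 2) ^ n / n.factorial) (exp (-t ^ 2)) := by
    rw [Real.exp_eq_exp_ℝ]
    exact NormedSpace.expSeries_div_hasSum_exp _
  simpa only [hterm] using h

theorem norm_exp_neg_sq_term (t : ℝ) (n : ℕ) :
    ‖(-1 : ℝ) ^ n * t ^ (2 * n) / n.factorial‖ = (t ^ 2) ^ n / n.factorial := by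
  rw [norm_div, norm_mul, norm_pow, norm_neg, norm_one, one_pow, one_mul, pow_mul,
    Real.norm_of_nonneg (by positivity), Real.norm_natCast]

theorem hasSum_integral_exp_neg_sq (x : ℝ) :
    HasSum (fun n : ℕ => (-1 : ℝ) ^ n * x ^ (2 * n + 1) / ((2 * n + 1) * n.factorial))
      (∫ t in (0 : ℝ)..x, exp (-t ^ 2)) := by
  have hterm (n : ℕ) : ∫ t in (0 : ℝ)..x, (-1 : ℝ) ^ n * t ^ (2 * n) / n.factorial
      = (-1 : ℝ) ^ n * x ^ (2 * n + 1) / ((2 * n + 1) * n.factorial) := by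
    simp only [integral_div, integral_const_mul, integral_pow]
    push_cast
    field_simp
    ring
  refine funext hterm ▸ hasSum_integral_of_dominated_convergence
    (fun n _ => (x ^ 2) ^ n / n.factorial)
    (fun n => (by fun_prop : Continuous _).aestronglyMeasurable) (fun n => ?_)
    (.of_forall fun _ _ => Real.summable_pow_div_factorial _) intervalIntegrable_const
    (.of_forall fun t _ => hasSum_exp_neg_sq t)
  refine .of_forall fun t ht => ?_
  have htx : t ^ 2 ≤ x ^ 2 := by
    rcases Set.mem_uIoc.mp ht with ⟨h0, hx⟩ | ⟨hx, h0⟩ <;> nlinarith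
  rw [norm_exp_neg_sq_term]
  gcongr

theorem sum_Icc_two_mul_add_one (r : ℕ) :
    ∑ i ∈ Finset.Icc 1 r, (2 * (i : ℝ) + 1) = r * (r + 2) := by
  induction r with
  | zero => simp
  | succ n ih =>
    rw [Finset.sum_Icc_succ_top (by omega), ih]
    push_cast
    ring

theorem prod_Icc_sum_Icc_two_mul_add_one (k : ℕ) :
    ∏ r ∈ Finset.Icc 1 k, ∑ i ∈ Finset.Icc 1 r, (2 * (i : ℝ) + 1)
      = k.factorial * (k + 2).factorial / 2 := by
  induction k with
  | zero => norm_num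
  | succ n ih =>
    rw [Finset.prod_Icc_succ_top (by omega), ih, sum_Icc_two_mul_add_one]
    push_cast [Nat.factorial_succ]
    ring

theorem erf_series_term_eq (x : ℝ) (k : ℕ) :
    (-1 : ℝ) ^ k * (2 * (k : ℝ) + 1) * (Nat.factorial (k + 1) : ℝ) * x ^ (2 * k) /
        ((2 * (k : ℝ) + 5) * ∏ r ∈ Finset.Icc 1 k, (∑ i ∈ Finset.Icc 1 r, (2 * (i : ℝ) + 1)))
      = 2 * (2 * k + 1) / ((2 * k + 5) * (k + 2)) * ((-1 : ℝ) ^ k * x ^ (2 * k) / k.factorial) := by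
  rw [prod_Icc_sum_Icc_two_mul_add_one]
  push_cast [Nat.factorial_succ]
  field_simp
  ring

theorem summable_erf_tail_series (x : ℝ) :
    Summable fun k : ℕ =>
      2 * (2 * k + 1) / ((2 * k + 5) * (k + 2)) * ((-1 : ℝ) ^ k * x ^ (2 * k) / k.factorial) := by
  refine .of_norm_bounded (Real.summable_pow_div_factorial (x ^ 2)) fun k => ?_
  have hq : 2 * (2 * k + 1) / ((2 * k + 5) * (k + 2)) ≤ (1 : ℝ) := by
    rw [div_le_one (by positivity)]
    nlinarith
  rw [norm_mul, norm_exp_neg_sq_term, Real.norm_of_nonneg (by positivity)]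
  exact mul_le_of_le_one_left (by positivity) hq

theorem erf_tail_term_eq (x : ℝ) (n : ℕ) :
    x ^ 5 / 6 * (2 * (2 * n + 1) / ((2 * n + 5) * (n + 2)) *
        ((-1 : ℝ) ^ n * x ^ (2 * n) / n.factorial))
      = 2 * ((-1 : ℝ) ^ (n + 2) * x ^ (2 * (n + 2) + 1) /
            ((2 * ((n + 2 : ℕ) : ℝ) + 1) * (n + 2).factorial))
        - x * ((-1 : ℝ) ^ (n + 2) * x ^ (2 * (n + 2)) / (n + 2).factorial)
        - x ^ 3 / 3 * ((-1 : ℝ) ^ (n + 1) * x ^ (2 * (n + 1)) / (n + 1).factorial) := by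
  push_cast [Nat.factorial_succ]
  field_simp
  ring

theorem two_mul_integral_exp_neg_sq_eq (x : ℝ) :
    2 * ∫ t in (0 : ℝ)..x, exp (-t ^ 2)
      = x + x * (1 + x ^ 2 / 3) * exp (-x ^ 2) +
        x ^ 5 / 6 * ∑' k : ℕ,
          2 * (2 * k + 1) / ((2 * k + 5) * (k + 2)) * ((-1 : ℝ) ^ k * x ^ (2 * k) / k.factorial) := by
  have hS := (hasSum_nat_add_iff' 2).mpr (hasSum_integral_exp_neg_sq x)
  have hE₂ := (hasSum_nat_add_iff' 2).mpr (hasSum_exp_neg_sq x)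
  have hE₁ := (hasSum_nat_add_iff' 1).mpr (hasSum_exp_neg_sq x)
  have hTail := ((hS.mul_left 2).sub (hE₂.mul_left x)).sub (hE₁.mul_left (x ^ 3 / 3))
  rw [← funext (erf_tail_term_eq x)] at hTail
  rw [← tsum_mul_left, hTail.tsum_eq]
  simp only [Finset.sum_range_succ, Finset.sum_range_zero]
  norm_num
  ring

/-- New series for the error function based on the first order spline approximation. -/
theorem erf_series_order_one (x : ℝ) :
    Summable (fun k : ℕ =>
      (-1 : ℝ) ^ k * (2 * (k : ℝ) + 1) * (Nat.factorial (k + 1) : ℝ) * x ^ (2 * k) /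
        ((2 * (k : ℝ) + 5) *
          ∏ r ∈ Finset.Icc 1 k, (∑ i ∈ Finset.Icc 1 r, (2 * (i : ℝ) + 1)))) ∧
    erf x = x / Real.sqrt π +
      (x / Real.sqrt π) * (1 + x ^ 2 / 3) * Real.exp (-x ^ 2) +
      (x ^ 5 / (6 * Real.sqrt π)) *
        ∑' k : ℕ,
          (-1 : ℝ) ^ k * (2 * (k : ℝ) + 1) * (Nat.factorial (k + 1) : ℝ) * x ^ (2 * k) /
            ((2 * (k : ℝ) + 5) *
              ∏ r ∈ Finset.Icc 1 k, (∑ i ∈ Finset.Icc 1 r, (2 * (i : ℝ) + 1))) := by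
  simp only [erf_series_term_eq]
  refine ⟨summable_erf_tail_series x, ?_⟩
  have hπ : Real.sqrt π ≠ 0 := (Real.sqrt_pos.mpr Real.pi_pos).ne'
  rw [erf, div_mul_eq_mul_div, two_mul_integral_exp_neg_sq_eq]
  field_simp
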